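/- The number NCM_2(2n) of 2-distant noncrossing complete matchings of [2n] equals the n-th little Schröder number s_n (equivalently, the number of little Schröder paths of length 2n). -/

import Mathlib

open Finset

/-- Set partitions of `[n] = {1, …, n}`. -/
abbrev SP (n : ℕ) := Finpartition (Finset.Icc 1 n)

/-- `(i, j)` is an edge of the diagram of the partition `P`: either a loop `(i, i)`
on a singleton block, or `i < j` are in a common block with no element of that
block strictly between them. -/
def IsEdge {n : ℕ} (P : SP n) (i j : ℕ) : Prop :=
  (i = j ∧ {i} ∈ P.parts) ∨
  (i < j ∧ ∃ B ∈ P.parts, i ∈ B ∧ j ∈ B ∧ ∀ m ∈ B, ¬(i < m ∧ m < j))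

/-- Two edges `e₁ = (i₁, j₁)` and `e₂ = (i₂, j₂)` form a `k`-distant crossing:
`i₁ < i₂ ≤ j₁ < j₂` and `j₁ - i₂ ≥ k`. -/
def CrossPair (k : ℕ) (e₁ e₂ : ℕ × ℕ) : Prop :=
  e₁.1 < e₂.1 ∧ e₂.1 ≤ e₁.2 ∧ e₁.2 < e₂.2 ∧ k ≤ e₁.2 - e₂.1

/-- Two edges `e₁ = (i₁, j₁)` and `e₂ = (i₂, j₂)` form a `k`-distant nesting:
`i₁ < i₂ ≤ j₂ < j₁` and `j₂ - i₂ ≥ k`. -/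
def NestPair (k : ℕ) (e₁ e₂ : ℕ × ℕ) : Prop :=
  e₁.1 < e₂.1 ∧ e₂.1 ≤ e₂.2 ∧ e₂.2 < e₁.2 ∧ k ≤ e₂.2 - e₂.1

/-- The number of `k`-distant crossings of the partition `P`. -/
noncomputable def dcr {n : ℕ} (k : ℕ) (P : SP n) : ℕ :=
  Set.ncard {p : (ℕ × ℕ) × ℕ × ℕ |
    IsEdge P p.1.1 p.1.2 ∧ IsEdge P p.2.1 p.2.2 ∧ CrossPair k p.1 p.2}

/-- The number of `k`-distant nestings of the partition `P`. -/
noncomputable def dne {n : ℕ} (k : ℕ) (P : SP n) : ℕ :=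
  Set.ncard {p : (ℕ × ℕ) × ℕ × ℕ |
    IsEdge P p.1.1 p.1.2 ∧ IsEdge P p.2.1 p.2.2 ∧ NestPair k p.1 p.2}

/-- `P` is a complete matching: every block has exactly two elements. -/
def IsMatching {n : ℕ} (P : SP n) : Prop := ∀ B ∈ P.parts, B.card = 2

/-- The number of `k`-distant noncrossing complete matchings of `[m]`. -/
noncomputable def NCM (k m : ℕ) : ℕ :=
  Set.ncard {P : SP m | IsMatching P ∧ dcr k P = 0}

/-- The number of `k`-distant noncrossing partitions of `[n]`. -/
noncomputable def NCP (k n : ℕ) : ℕ :=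
  Set.ncard {P : SP n | dcr k P = 0}

/-- Openers of `P`: minimal elements of blocks of size at least two. -/
def openers {n : ℕ} (P : SP n) : Set ℕ :=
  {v | ∃ B ∈ P.parts, v ∈ B ∧ 2 ≤ B.card ∧ ∀ m ∈ B, v ≤ m}

/-- Closers of `P`: maximal elements of blocks of size at least two. -/
def closers {n : ℕ} (P : SP n) : Set ℕ :=
  {v | ∃ B ∈ P.parts, v ∈ B ∧ 2 ≤ B.card ∧ ∀ m ∈ B, m ≤ v}

/-- Singletons of `P`. -/
def singletons {n : ℕ} (P : SP n) : Set ℕ := {v | {v} ∈ P.parts}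

/-- Transients of `P`: elements of a block that are neither its minimum nor its
maximum (equivalently, vertices incident to two edges of the diagram). -/
def transients {n : ℕ} (P : SP n) : Set ℕ :=
  {v | ∃ B ∈ P.parts, v ∈ B ∧ (∃ m ∈ B, m < v) ∧ (∃ m ∈ B, v < m)}

open Finset

/-- Steps for Schröder paths: `U = (1,1)`, `D = (1,-1)`, `H = (2,0)`. -/
inductive SStep | U | D | H
deriving DecidableEq

/-- The total horizontal length of a Schröder path. -/
def xlen (l : List SStep) : ℕ :=
  (l.map (fun s => match s with | .H => 2 | _ => 1)).sum

/-- The final height of a Schröder path. -/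
def sht (l : List SStep) : ℤ :=
  (l.map (fun s => match s with | .U => 1 | .D => -1 | .H => 0)).sum

/-- A little Schröder path of length `2n`: from `(0,0)` to `(2n,0)` with steps
`(1,1)`, `(1,-1)`, `(2,0)`, never below the x-axis, no `(2,0)` step on the x-axis. -/
def IsLittleSchroederPath (n : ℕ) (l : List SStep) : Prop :=
  xlen l = 2 * n ∧ sht l = 0 ∧ (∀ p, p <+: l → 0 ≤ sht p) ∧
  ∀ p, p ++ [SStep.H] <+: l → 0 < sht p

/-- The `n`-th little Schröder number (A001003), as the number of little
Schröder paths of length `2n`. -/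
noncomputable def littleSchroeder (n : ℕ) : ℕ :=
  Set.ncard {l : List SStep | IsLittleSchroederPath n l}

/-- Steps for Motzkin paths. -/
inductive MStep | up | down | flat
deriving DecidableEq

instance : Fintype MStep :=
  ⟨{MStep.up, MStep.down, MStep.flat}, fun x => by cases x <;> simp⟩

/-- The height of a Motzkin path `f` of length `m` after `i` steps. -/
def mht {m : ℕ} (f : Fin m → MStep) (i : ℕ) : ℤ :=
  ∑ j : Fin m, if (j : ℕ) < i then
    (match f j with | .up => 1 | .down => -1 | .flat => 0) else 0

/-- `f` is a Motzkin path: it stays weakly above the x-axis and ends at height 0. -/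
def IsMotzkinPath {m : ℕ} (f : Fin m → MStep) : Prop :=
  (∀ i, 0 ≤ mht f i) ∧ mht f m = 0

/-- The `n`-th Motzkin number, as the number of Motzkin paths of length `n`. -/
noncomputable def motzkin (n : ℕ) : ℕ :=
  Set.ncard {f : Fin n → MStep | IsMotzkinPath f}

/-- The weight of the path `f`, where up steps have weight 1, a horizontal step
at height `h` has weight `b h`, and a down step starting at height `h` has
weight `lam h`. -/
def mweight {m : ℕ} (b lam : ℕ → ℕ) (f : Fin m → MStep) : ℕ :=
  ∏ j : Fin m, match f j with
    | .up => 1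
    | .flat => b (mht f (j : ℕ)).toNat
    | .down => lam (mht f (j : ℕ)).toNat

open Classical in
/-- The total weight of all weighted Motzkin paths of length `m`
(the `m`-th moment for the recurrence coefficients `b`, `lam`). -/
noncomputable def moment (b lam : ℕ → ℕ) (m : ℕ) : ℕ :=
  ∑ f ∈ Finset.univ.filter (fun f : Fin m → MStep => IsMotzkinPath f),
    mweight b lam f

open Classical in
/-- The total weight of all weighted Dyck paths (Motzkin paths with no
horizontal steps) of length `m`, where a down step starting at height `h` has
weight `lam h`. -/
noncomputable def dyckMoment (lam : ℕ → ℕ) (m : ℕ) : ℕ :=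
  ∑ f ∈ Finset.univ.filter
      (fun f : Fin m → MStep => IsMotzkinPath f ∧ ∀ j, f j ≠ MStep.flat),
    mweight (fun _ => 1) lam f

/-!
Read a matching of `[1, m]` from left to right, keeping a stack of the points opened so far and
not yet closed. In a 2-distant noncrossing matching a closer closes the top of the stack, except
that a closer right after an opener may instead close the point below it: the two edges then
cross at distance one. Writing `U` for an opener, `D` for a closer of the top and `H` for such a
crossing pair of positions gives a little Schröder path whose height is the stack size; an `H`
needs a second open point, so it never lies on the axis. Decoding a path with the same stack
discipline inverts this reading.
-/

theorem List.forall_prefix_cons {α : Type*} {P : List α → Prop} {a : α} {l : List α} :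
    (∀ q, q <+: a :: l → P q) ↔ P [] ∧ ∀ q, q <+: l → P (a :: q) := by
  simp only [List.prefix_cons_iff]
  grind

theorem List.forall_prefix_append_singleton_cons {α : Type*} {P : List α → Prop} {a b : α}
    {l : List α} :
    (∀ q, q ++ [b] <+: a :: l → P q) ↔ (a = b → P []) ∧ ∀ q, q ++ [b] <+: l → P (a :: q) := by
  refine ⟨fun h => ⟨?_, fun q hq => h _ (by simpa using hq)⟩, fun ⟨h₀, h⟩ q hq => ?_⟩
  · rintro rfl
    exact h [] (by simp)
  · cases q with
    | nil => exact h₀ (List.cons_prefix_cons.1 hq).1.symm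
    | cons c q =>
      rw [List.cons_append, List.cons_prefix_cons] at hq
      obtain ⟨rfl, hq⟩ := hq
      exact h q hq

theorem Finpartition.ext_of_part_eq {α : Type*} [DecidableEq α] {s : Finset α}
    {P Q : Finpartition s} (h : ∀ x ∈ s, P.part x = Q.part x) : P = Q := by
  have key : ∀ {P Q : Finpartition s}, (∀ x ∈ s, P.part x = Q.part x) → P.parts ⊆ Q.parts := by
    intro P Q h B hB
    obtain ⟨x, hx, rfl⟩ := P.part_surjOn hB
    exact h x hx ▸ Q.part_mem.2 hx
  exact Finpartition.ext (subset_antisymm (key h) (key fun x hx => (h x hx).symm))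

namespace LittleSchroederMatching

@[simp] lemma xlen_nil : xlen [] = 0 := rfl
@[simp] lemma xlen_cons_U (l : List SStep) : xlen (.U :: l) = xlen l + 1 := by simp [xlen, add_comm]
@[simp] lemma xlen_cons_D (l : List SStep) : xlen (.D :: l) = xlen l + 1 := by simp [xlen, add_comm]
@[simp] lemma xlen_cons_H (l : List SStep) : xlen (.H :: l) = xlen l + 2 := by simp [xlen, add_comm]

@[simp] lemma sht_nil : sht [] = 0 := rfl
@[simp] lemma sht_cons_U (l : List SStep) : sht (.U :: l) = 1 + sht l := by simp [sht]
@[simp] lemma sht_cons_D (l : List SStep) : sht (.D :: l) = -1 + sht l := by simp [sht]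
@[simp] lemma sht_cons_H (l : List SStep) : sht (.H :: l) = sht l := by simp [sht]

/-- `l` is the rest of a little Schröder path that has reached height `k`. -/
def IsLittleSchroederFrom : ℕ → List SStep → Prop
  | k, [] => k = 0
  | k, .U :: l => IsLittleSchroederFrom (k + 1) l
  | 0, .D :: _ => False
  | k + 1, .D :: l => IsLittleSchroederFrom k l
  | 0, .H :: _ => False
  | k + 1, .H :: l => IsLittleSchroederFrom (k + 1) l

theorem isLittleSchroederFrom_iff {k : ℕ} {l : List SStep} :
    IsLittleSchroederFrom k l ↔ (∀ q, q <+: l → 0 ≤ (k : ℤ) + sht q) ∧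
      (∀ q, q ++ [.H] <+: l → 0 < (k : ℤ) + sht q) ∧ (k : ℤ) + sht l = 0 := by
  induction l generalizing k with
  | nil => simp [IsLittleSchroederFrom]
  | cons a l ih =>
    rw [List.forall_prefix_cons, List.forall_prefix_append_singleton_cons]
    cases a with
    | U =>
      have e (x : ℤ) : (k : ℤ) + (1 + x) = ((k + 1 : ℕ) : ℤ) + x := by push_cast; ring
      simp [IsLittleSchroederFrom, ih, e]
    | D =>
      cases k with
      | zero =>
        simp only [IsLittleSchroederFrom, false_iff]
        exact fun ⟨⟨_, h⟩, _⟩ => by simpa using h [] List.nil_prefix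
      | succ k => simp [IsLittleSchroederFrom, ih, add_nonneg]
    | H =>
      cases k with
      | zero => simp [IsLittleSchroederFrom]
      | succ k => simp [IsLittleSchroederFrom, ih, add_nonneg]

theorem isLittleSchroederPath_iff {n : ℕ} {l : List SStep} :
    IsLittleSchroederPath n l ↔ xlen l = 2 * n ∧ IsLittleSchroederFrom 0 l := by
  simp only [IsLittleSchroederPath, isLittleSchroederFrom_iff, Nat.cast_zero, zero_add]
  tauto

/-- The edges of the matching of a path read from position `p`, with `s` the stack of open
points. -/
def decode : List SStep → ℕ → List ℕ → List (ℕ × ℕ)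
  | [], _, _ => []
  | .U :: l, p, s => decode l (p + 1) (p :: s)
  | .D :: l, p, s => (s.headI, p) :: decode l (p + 1) s.tail
  | .H :: l, p, s => (s.headI, p + 1) :: decode l (p + 2) (p :: s.tail)

def endpoints (E : List (ℕ × ℕ)) : List ℕ := E.flatMap fun e => [e.1, e.2]

@[simp] lemma endpoints_nil : endpoints [] = [] := rfl
@[simp] lemma endpoints_cons (e : ℕ × ℕ) (E : List (ℕ × ℕ)) :
    endpoints (e :: E) = e.1 :: e.2 :: endpoints E := rfl

lemma mem_endpoints {E : List (ℕ × ℕ)} {x : ℕ} :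
    x ∈ endpoints E ↔ ∃ e ∈ E, x = e.1 ∨ x = e.2 := by
  simp [endpoints]

section Decode

variable {l : List SStep} {p : ℕ} {s : List ℕ}

lemma stack_mono {q : ℕ} (hs : (p :: s).Pairwise (· > ·)) (hpq : p ≤ q) :
    (q :: s).Pairwise (· > ·) :=
  hs.of_cons.cons fun _ hy => (List.rel_of_pairwise_cons hs hy).trans_le hpq

lemma stack_push (hs : (p :: s).Pairwise (· > ·)) : ((p + 1) :: p :: s).Pairwise (· > ·) :=
  hs.cons fun y hy => by
    obtain rfl | hy := List.mem_cons.1 hy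
    · omega
    · exact (List.rel_of_pairwise_cons hs hy).trans (by omega)

lemma stack_drop {x : ℕ} (hs : (p :: x :: s).Pairwise (· > ·)) : (p :: s).Pairwise (· > ·) :=
  hs.sublist ((List.sublist_cons_self x s).cons_cons p)

lemma stack_pop {x : ℕ} (hs : (p :: x :: s).Pairwise (· > ·)) :
    ((p + 1) :: s).Pairwise (· > ·) :=
  stack_mono (stack_drop hs) (by omega)

lemma stack_cross {x : ℕ} (hs : (p :: x :: s).Pairwise (· > ·)) :
    ((p + 2) :: p :: s).Pairwise (· > ·) :=
  stack_mono (stack_push (stack_drop hs)) (by omega)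

theorem bounds_of_mem_decode (hs : (p :: s).Pairwise (· > ·))
    (hl : IsLittleSchroederFrom s.length l) :
    ∀ e ∈ decode l p s, e.1 < e.2 ∧ p ≤ e.2 ∧ (e.1 ∈ s ∨ p ≤ e.1) := by
  induction l generalizing p s with
  | nil => simp [decode]
  | cons a l ih =>
    cases a with
    | U =>
      intro e he
      have := ih (stack_push hs) hl e he
      simp only [List.mem_cons] at this
      grind
    | D =>
      obtain _ | ⟨x, s⟩ := s
      · exact hl.elim
      have hx : x < p := List.rel_of_pairwise_cons hs List.mem_cons_self
      intro e he
      obtain rfl | he := List.mem_cons.1 he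
      · simp [hx]
      have := ih (stack_pop hs) hl e he
      grind
    | H =>
      obtain _ | ⟨x, s⟩ := s
      · exact hl.elim
      have hx : x < p := List.rel_of_pairwise_cons hs List.mem_cons_self
      intro e he
      obtain rfl | he := List.mem_cons.1 he
      · exact ⟨show x < p + 1 by omega, by omega, Or.inl List.mem_cons_self⟩
      have := ih (stack_cross hs) hl e he
      simp only [List.mem_cons] at this
      grind


theorem endpoints_decode_perm (hl : IsLittleSchroederFrom s.length l) :
    (endpoints (decode l p s)).Perm (s ++ List.range' p (xlen l)) := by
  induction l generalizing p s with
  | nil =>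
    obtain rfl : s = [] := List.length_eq_zero_iff.1 hl
    simp [decode]
  | cons a l ih =>
    rw [← Multiset.coe_eq_coe]
    cases a with
    | U =>
      have := Multiset.coe_eq_coe.2 (ih (p := p + 1) (s := p :: s) hl)
      simp only [decode, this, xlen_cons_U, List.range'_succ, ← Multiset.coe_add,
        ← Multiset.cons_coe, Multiset.add_cons, Multiset.cons_add]
    | D =>
      obtain _ | ⟨x, s⟩ := s
      · exact hl.elim
      have := Multiset.coe_eq_coe.2 (ih (p := p + 1) (s := s) hl)
      simp only [decode, endpoints_cons, List.headI_cons, List.tail_cons, this, xlen_cons_D,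
        List.range'_succ, List.cons_append, ← Multiset.coe_add, ← Multiset.cons_coe,
        Multiset.add_cons]
    | H =>
      obtain _ | ⟨x, s⟩ := s
      · exact hl.elim
      have := Multiset.coe_eq_coe.2 (ih (p := p + 2) (s := p :: s) hl)
      simp only [decode, endpoints_cons, List.headI_cons, List.tail_cons, this, xlen_cons_H,
        List.range'_succ, List.cons_append, ← Multiset.coe_add, ← Multiset.cons_coe,
        Multiset.add_cons]
      rw [Multiset.cons_swap (p + 1)]

theorem decode_not_crossPair (hs : (p :: s).Pairwise (· > ·))
    (hl : IsLittleSchroederFrom s.length l) :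
    ∀ e₁ ∈ decode l p s, ∀ e₂ ∈ decode l p s, ¬ CrossPair 2 e₁ e₂ := by
  induction l generalizing p s with
  | nil => simp [decode]
  | cons a l ih =>
    cases a with
    | U => exact ih (stack_push hs) hl
    | D =>
      obtain _ | ⟨x, s⟩ := s
      · exact hl.elim
      have hx : ∀ y ∈ s, y < x := fun y hy => List.rel_of_pairwise_cons hs.of_cons hy
      have hedge := bounds_of_mem_decode (stack_pop hs) hl
      simp only [decode, List.headI_cons, List.tail_cons, List.forall_mem_cons, CrossPair]
      refine ⟨⟨by omega, fun e he => ?_⟩, fun e he => ⟨?_, ih (stack_pop hs) hl e he⟩⟩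
      · obtain ⟨-, -, h | h⟩ := hedge e he
        · have := hx _ h
          omega
        · omega
      · have := hedge e he
        omega
    | H =>
      obtain _ | ⟨x, s⟩ := s
      · exact hl.elim
      have hx : ∀ y ∈ s, y < x := fun y hy => List.rel_of_pairwise_cons hs.of_cons hy
      have hedge := bounds_of_mem_decode (l := l) (stack_cross hs) hl
      simp only [decode, List.headI_cons, List.tail_cons, List.forall_mem_cons, CrossPair]
      refine ⟨⟨by omega, fun e he => ?_⟩, fun e he => ⟨?_, ih (stack_cross hs) hl e he⟩⟩
      · obtain ⟨-, -, h | h⟩ := hedge e he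
        · obtain h | h := List.mem_cons.1 h
          · omega
          · have := hx _ h
            omega
        · omega
      · have := hedge e he
        omega

theorem exists_mem_decode_of_mem (hs : (p :: s).Pairwise (· > ·))
    (hl : IsLittleSchroederFrom s.length l) {x : ℕ} (hx : x ∈ s) :
    ∃ y, p ≤ y ∧ (x, y) ∈ decode l p s := by
  obtain ⟨e, he, h | h⟩ := mem_endpoints.1 ((endpoints_decode_perm hl).mem_iff.2
    (List.mem_append_left _ hx))
  · exact ⟨e.2, (bounds_of_mem_decode hs hl e he).2.1, h ▸ he⟩
  · have := (bounds_of_mem_decode hs hl e he).2.1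
    have := List.rel_of_pairwise_cons hs hx
    omega

end Decode

/-- The path of the matching with partner function `π`, read from position `p` with `f` units
of length left. -/
def encode (π : ℕ → ℕ) : ℕ → ℕ → List SStep
  | 0, _ => []
  | 1, _ => [.D]
  | f + 2, p =>
    if π p < p then .D :: encode π (f + 1) (p + 1)
    else if π (p + 1) < p then .H :: encode π f (p + 2)
    else .U :: encode π (f + 1) (p + 1)

section Encode

variable {π : ℕ → ℕ} {m f p : ℕ}

lemma xlen_encode (π : ℕ → ℕ) (f p : ℕ) : xlen (encode π f p) = f := by
  induction f using Nat.strong_induction_on generalizing p with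
  | _ f ih =>
    match f with
    | 0 => rfl
    | 1 => rfl
    | f + 2 =>
      simp only [encode]
      split_ifs <;> simp [ih]

lemma encode_of_lt (h : π p < p) : encode π (f + 1) p = .D :: encode π f (p + 1) := by
  cases f <;> simp [encode, h]

lemma encode_of_cross (h₁ : ¬ π p < p) (h₂ : π (p + 1) < p) :
    encode π (f + 2) p = .H :: encode π f (p + 2) := by
  simp [encode, h₁, h₂]

lemma encode_of_not_cross (h₁ : ¬ π p < p) (h₂ : ¬ π (p + 1) < p) :
    encode π (f + 2) p = .U :: encode π (f + 1) (p + 1) := by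
  simp [encode, h₁, h₂]

def SwapsEnds (π : ℕ → ℕ) (E : List (ℕ × ℕ)) : Prop := ∀ e ∈ E, π e.1 = e.2 ∧ π e.2 = e.1

lemma swapsEnds_cons {e : ℕ × ℕ} {E : List (ℕ × ℕ)} :
    SwapsEnds π (e :: E) ↔ (π e.1 = e.2 ∧ π e.2 = e.1) ∧ SwapsEnds π E :=
  List.forall_mem_cons

variable {l : List SStep} {s : List ℕ}

lemma lt_partner_of_ne_D {a : SStep} (hs : (p :: s).Pairwise (· > ·))
    (hl : IsLittleSchroederFrom s.length (a :: l)) (hπ : SwapsEnds π (decode (a :: l) p s))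
    (ha : a ≠ .D) : p < π p := by
  cases a with
  | U =>
    obtain ⟨y, hy, he⟩ := exists_mem_decode_of_mem (stack_push hs) hl List.mem_cons_self
    have : π p = y := (hπ _ he).1
    omega
  | D => exact absurd rfl ha
  | H =>
    obtain _ | ⟨x, s⟩ := s
    · exact hl.elim
    obtain ⟨y, hy, he⟩ := exists_mem_decode_of_mem (l := l) (stack_cross hs) hl List.mem_cons_self
    have : π p = y := (hπ _ (List.mem_cons_of_mem _ he)).1
    omega

theorem encode_decode (hs : (p :: s).Pairwise (· > ·)) (hl : IsLittleSchroederFrom s.length l)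
    (hπ : SwapsEnds π (decode l p s)) : encode π (xlen l) p = l := by
  induction l generalizing p s with
  | nil => rfl
  | cons a l ih =>
    cases a with
    | U =>
      have h₁ : ¬ π p < p := not_lt.2 (lt_partner_of_ne_D hs hl hπ (by simp)).le
      obtain _ | ⟨b, l⟩ := l
      · exact absurd hl (by simp [IsLittleSchroederFrom])
      have h₂ : ¬ π (p + 1) < p := by
        by_cases hb : b = .D
        · subst hb
          have : π (p + 1) = p := (hπ (p, p + 1) List.mem_cons_self).2
          omega
        · have := lt_partner_of_ne_D (stack_push hs) hl hπ hb
          omega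
      obtain ⟨g, hg⟩ : ∃ g, xlen (b :: l) = g + 1 := by cases b <;> simp
      rw [xlen_cons_U, hg, encode_of_not_cross h₁ h₂, ← hg, ih (stack_push hs) hl hπ]
    | D =>
      obtain _ | ⟨x, s⟩ := s
      · exact hl.elim
      have h : π p < p := (hπ (x, p) List.mem_cons_self).2 ▸ List.rel_of_pairwise_cons hs
        List.mem_cons_self
      rw [xlen_cons_D, encode_of_lt h, ih (stack_pop hs) hl fun e he => hπ e
        (List.mem_cons_of_mem _ he)]
    | H =>
      obtain _ | ⟨x, s⟩ := s
      · exact hl.elim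
      have h₁ : ¬ π p < p := not_lt.2 (lt_partner_of_ne_D hs hl hπ (by simp)).le
      have h₂ : π (p + 1) < p := (hπ (x, p + 1) List.mem_cons_self).2 ▸
        List.rel_of_pairwise_cons hs List.mem_cons_self
      rw [xlen_cons_H, encode_of_cross h₁ h₂, ih (stack_cross hs) hl fun e he => hπ e
        (List.mem_cons_of_mem _ he)]

structure IsTwoNoncrossingPartner (π : ℕ → ℕ) (m : ℕ) : Prop where
  mem : ∀ x ∈ Icc 1 m, π x ∈ Icc 1 m
  involutive : ∀ x ∈ Icc 1 m, π (π x) = x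
  ne_self : ∀ x ∈ Icc 1 m, π x ≠ x
  -- if `x < y ≤ π x < π y`, the edges from `x` and `y` cross at distance `π x - y < 2`
  noncrossing : ∀ x ∈ Icc 1 m, ∀ y ∈ Icc 1 m, x < y → π x < π y → π x < y + 2

structure EncodeInv (π : ℕ → ℕ) (p : ℕ) (s : List ℕ) : Prop where
  pairwise : (p :: s).Pairwise (· > ·)
  mem_iff : ∀ x, x ∈ s ↔ 0 < x ∧ x < p ∧ p ≤ π x
  -- the encoder chose `U` rather than `H` at `p - 1`
  le_partner : ∀ x ∈ s, x + 1 = p → x ≤ π p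

lemma IsTwoNoncrossingPartner.symm (hπ : IsTwoNoncrossingPartner π m) {x y : ℕ}
    (hx : x ∈ Icc 1 m) (h : π x = y) : π y = x :=
  h ▸ hπ.involutive x hx

namespace EncodeInv

variable (hπ : IsTwoNoncrossingPartner π m) (inv : EncodeInv π p s)
include hπ inv

lemma pop (hp : p ∈ Icc 1 m) (h : π p < p) :
    ∃ s', s = π p :: s' ∧ EncodeInv π (p + 1) s' := by
  have hpm := Finset.mem_Icc.1 hp
  have hq : π p ∈ Icc 1 m := hπ.mem p hp
  have hpp := hπ.involutive p hp
  have hmem : π p ∈ s := (inv.mem_iff _).2 ⟨(Finset.mem_Icc.1 hq).1, h, hpp.ge⟩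
  obtain _ | ⟨y, s⟩ := s
  · simp at hmem
  have hs : ∀ x ∈ s, x < y := fun x hx => List.rel_of_pairwise_cons inv.pairwise.of_cons hx
  -- a stack point above `π p` crosses `(π p, p)`, at distance one only if it is `p - 1`
  obtain rfl : y = π p := by
    by_contra hne
    have hlt := hs _ ((List.mem_cons.1 hmem).resolve_left (Ne.symm hne))
    obtain ⟨hy0, hyp, hpy⟩ := (inv.mem_iff y).1 List.mem_cons_self
    have hy : y ∈ Icc 1 m := Finset.mem_Icc.2 ⟨hy0, by omega⟩
    have : π y ≠ p := fun e => hne (hπ.symm hy e).symm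
    have := hπ.noncrossing (π p) hq y hy hlt (by omega)
    have := inv.le_partner y List.mem_cons_self (by omega)
    omega
  refine ⟨s, rfl, stack_pop inv.pairwise, fun x => ⟨fun hx => ?_, fun ⟨hx0, hxp, hpx⟩ => ?_⟩,
    fun x hx _ => ?_⟩
  · obtain ⟨hx0, hxp, hpx⟩ := (inv.mem_iff x).1 (List.mem_cons_of_mem _ hx)
    have : π x ≠ p := fun e => (hs x hx).ne (hπ.symm (Finset.mem_Icc.2 ⟨hx0, by omega⟩) e).symm
    omega
  · have hxp : x ≠ p := by rintro rfl; omega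
    refine ((List.mem_cons.1 ((inv.mem_iff x).2 ⟨hx0, by omega, by omega⟩)).resolve_left ?_)
    rintro rfl
    omega
  · have := hs x hx
    omega

lemma cross (hp : p + 1 ∈ Icc 1 m) (h₁ : p < π p) (h₂ : π (p + 1) < p) :
    ∃ s', s = π (p + 1) :: s' ∧ EncodeInv π (p + 2) (p :: s') := by
  have hq : π (p + 1) ∈ Icc 1 m := hπ.mem _ hp
  have hqm := Finset.mem_Icc.1 hq
  have hpm := Finset.mem_Icc.1 hp
  have hp' : p ∈ Icc 1 m := Finset.mem_Icc.2 ⟨by omega, by omega⟩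
  have hqq := hπ.involutive _ hp
  have hmem : π (p + 1) ∈ s := (inv.mem_iff _).2 ⟨hqm.1, h₂, by omega⟩
  obtain _ | ⟨y, s⟩ := s
  · simp at hmem
  have hs : ∀ x ∈ s, x < y := fun x hx => List.rel_of_pairwise_cons inv.pairwise.of_cons hx
  obtain rfl : y = π (p + 1) := by
    by_contra hne
    have hlt := hs _ ((List.mem_cons.1 hmem).resolve_left (Ne.symm hne))
    obtain ⟨hy0, hyp, hpy⟩ := (inv.mem_iff y).1 List.mem_cons_self
    have hy : y ∈ Icc 1 m := Finset.mem_Icc.2 ⟨hy0, by omega⟩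
    have : π y ≠ p := fun e => by have := hπ.symm hy e; omega
    have : π y ≠ p + 1 := fun e => hne (hπ.symm hy e).symm
    have := hπ.noncrossing _ hq y hy hlt (by omega)
    omega
  have hpp : π p ≠ p + 1 := fun e => by have := hπ.symm hp' e; omega
  refine ⟨s, rfl, stack_cross inv.pairwise, fun x => ⟨fun hx => ?_, fun ⟨hx0, hxp, hpx⟩ => ?_⟩,
    fun x hx hxp => ?_⟩
  · obtain rfl | hx := List.mem_cons.1 hx
    · omega
    obtain ⟨hx0, hxp, hpx⟩ := (inv.mem_iff x).1 (List.mem_cons_of_mem _ hx)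
    have hxI : x ∈ Icc 1 m := Finset.mem_Icc.2 ⟨hx0, by omega⟩
    have : π x ≠ p := fun e => by have := hπ.symm hxI e; omega
    have : π x ≠ p + 1 := fun e => (hs x hx).ne (hπ.symm hxI e).symm
    omega
  · obtain hxp | rfl | rfl : x < p ∨ x = p ∨ x = p + 1 := by omega
    · refine List.mem_cons_of_mem _ ((List.mem_cons.1 ((inv.mem_iff x).2
        ⟨hx0, hxp, by omega⟩)).resolve_left ?_)
      rintro rfl
      omega
    · exact List.mem_cons_self
    · omega
  · obtain rfl | hx := List.mem_cons.1 hx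
    · omega
    · have := hs x hx
      omega

lemma push (hp : p ∈ Icc 1 m) (h₁ : p < π p) (h₂ : ¬ π (p + 1) < p) :
    EncodeInv π (p + 1) (p :: s) := by
  have hpm := Finset.mem_Icc.1 hp
  refine ⟨stack_push inv.pairwise, fun x => ⟨fun hx => ?_, fun ⟨hx0, hxp, hpx⟩ => ?_⟩,
    fun x hx hxp => ?_⟩
  · obtain rfl | hx := List.mem_cons.1 hx
    · omega
    obtain ⟨hx0, hxp, hpx⟩ := (inv.mem_iff x).1 hx
    have : π x ≠ p := fun e => by
      have := hπ.symm (Finset.mem_Icc.2 ⟨hx0, by omega⟩) e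
      omega
    omega
  · obtain hxp | rfl : x < p ∨ x = p := by omega
    · exact List.mem_cons_of_mem _ ((inv.mem_iff x).2 ⟨hx0, hxp, by omega⟩)
    · exact List.mem_cons_self
  · obtain rfl | hx := List.mem_cons.1 hx
    · omega
    · have := List.rel_of_pairwise_cons inv.pairwise hx
      omega

end EncodeInv

theorem decode_encode (hπ : IsTwoNoncrossingPartner π m) (f : ℕ) :
    ∀ p s, 0 < p → p + f = m + 1 → EncodeInv π p s →
      IsLittleSchroederFrom s.length (encode π f p) ∧ SwapsEnds π (decode (encode π f p) p s) := by
  induction f using Nat.strong_induction_on with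
  | _ f ih =>
  intro p s hp0 hpf inv
  obtain _ | f := f
  · obtain rfl : s = [] := List.eq_nil_iff_forall_not_mem.2 fun x hx => by
      obtain ⟨hx0, hxp, hpx⟩ := (inv.mem_iff x).1 hx
      have := Finset.mem_Icc.1 (hπ.mem x (Finset.mem_Icc.2 ⟨hx0, by omega⟩))
      omega
    exact ⟨rfl, by simp [SwapsEnds, encode, decode]⟩
  have hp : p ∈ Icc 1 m := Finset.mem_Icc.2 ⟨hp0, by omega⟩
  by_cases h : π p < p
  · obtain ⟨s, rfl, inv'⟩ := inv.pop hπ hp h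
    obtain ⟨hl, hsw⟩ := ih f (by omega) (p + 1) s (by omega) (by omega) inv'
    rw [encode_of_lt h]
    exact ⟨hl, swapsEnds_cons.2 ⟨⟨hπ.involutive p hp, rfl⟩, hsw⟩⟩
  have h₁ : p < π p := lt_of_le_of_ne (not_lt.1 h) (hπ.ne_self p hp).symm
  obtain _ | f := f
  · have := Finset.mem_Icc.1 (hπ.mem p hp)
    omega
  by_cases h₂ : π (p + 1) < p
  · have hp1 : p + 1 ∈ Icc 1 m := Finset.mem_Icc.2 ⟨by omega, by omega⟩
    obtain ⟨s, rfl, inv'⟩ := inv.cross hπ hp1 h₁ h₂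
    obtain ⟨hl, hsw⟩ := ih f (by omega) (p + 2) (p :: s) (by omega) (by omega) inv'
    rw [encode_of_cross h h₂]
    exact ⟨hl, swapsEnds_cons.2 ⟨⟨hπ.involutive (p + 1) hp1, rfl⟩, hsw⟩⟩
  · rw [encode_of_not_cross h h₂]
    exact ih (f + 1) (by omega) (p + 1) (p :: s) (by omega) (by omega) (inv.push hπ hp h₁ h₂)

end Encode

def edgeParts (E : List (ℕ × ℕ)) : Finset (Finset ℕ) :=
  (E.map fun e => ({e.1, e.2} : Finset ℕ)).toFinset

lemma mem_edgeParts {E : List (ℕ × ℕ)} {B : Finset ℕ} :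
    B ∈ edgeParts E ↔ ∃ e ∈ E, {e.1, e.2} = B := by
  simp [edgeParts]

def ofEdges {m : ℕ} (E : List (ℕ × ℕ)) (hE : (endpoints E).Perm (List.range' 1 m)) : SP m where
  parts := edgeParts E
  supIndep := by
    rw [Finset.supIndep_iff_pairwiseDisjoint]
    rintro _ hB _ hC hBC
    obtain ⟨e, he, rfl⟩ := mem_edgeParts.1 hB
    obtain ⟨f, hf, rfl⟩ := mem_edgeParts.1 hC
    have : Std.Symm (Function.onFun List.Disjoint fun e : ℕ × ℕ => [e.1, e.2]) :=
      ⟨fun _ _ h => h.symm⟩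
    have hef := (List.nodup_flatMap.1 (hE.nodup_iff.2 List.nodup_range')).2.forall he hf
      (by rintro rfl; exact hBC rfl)
    exact Finset.disjoint_left.2 fun x hx hx' => hef (by simpa using hx) (by simpa using hx')
  sup_parts := by
    ext x
    have hx : x ∈ endpoints E ↔ 1 ≤ x ∧ x ≤ m := by rw [hE.mem_iff, List.mem_range'_1]; omega
    simp only [Finset.mem_sup, mem_edgeParts, id_eq, Finset.mem_Icc, ← hx, mem_endpoints]
    grind
  bot_notMem h := by
    obtain ⟨e, -, he⟩ := mem_edgeParts.1 h
    simpa using congrArg (e.1 ∈ ·) he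

section Matching

variable {m : ℕ}

lemma isEdge_iff_of_isMatching {P : SP m} (hM : IsMatching P) {i j : ℕ} :
    IsEdge P i j ↔ i < j ∧ {i, j} ∈ P.parts := by
  constructor
  · rintro (⟨rfl, h⟩ | ⟨hij, B, hB, hi, hj, -⟩)
    · simpa using hM _ h
    · refine ⟨hij, ?_⟩
      rwa [Finset.eq_of_subset_of_card_le
        (Finset.insert_subset hi (Finset.singleton_subset_iff.2 hj))
        (by rw [hM B hB, Finset.card_pair hij.ne])]
  · rintro ⟨hij, hB⟩
    refine Or.inr ⟨hij, _, hB, by simp, by simp, ?_⟩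
    simp only [Finset.mem_insert, Finset.mem_singleton]
    omega

lemma IsEdge.mem_Icc {P : SP m} {i j : ℕ} (h : IsEdge P i j) :
    i ∈ Icc 1 m ∧ j ∈ Icc 1 m := by
  obtain ⟨rfl, h⟩ | ⟨-, B, hB, hi, hj, -⟩ := h
  · exact ⟨P.le h (by simp), P.le h (by simp)⟩
  · exact ⟨P.le hB hi, P.le hB hj⟩

lemma dcr_eq_zero_iff {k : ℕ} {P : SP m} :
    dcr k P = 0 ↔ ∀ e₁ e₂ : ℕ × ℕ, IsEdge P e₁.1 e₁.2 → IsEdge P e₂.1 e₂.2 →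
      ¬ CrossPair k e₁ e₂ := by
  have hfin : {p : (ℕ × ℕ) × ℕ × ℕ |
      IsEdge P p.1.1 p.1.2 ∧ IsEdge P p.2.1 p.2.2 ∧ CrossPair k p.1 p.2}.Finite := by
    refine ((((Icc 1 m).finite_toSet.prod (Icc 1 m).finite_toSet).prod
      ((Icc 1 m).finite_toSet.prod (Icc 1 m).finite_toSet))).subset ?_
    rintro ⟨e₁, e₂⟩ ⟨h₁, h₂, -⟩
    exact ⟨IsEdge.mem_Icc h₁, IsEdge.mem_Icc h₂⟩
  rw [dcr, Set.ncard_eq_zero hfin, Set.eq_empty_iff_forall_notMem]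
  simp

lemma pair_mem_ofEdges {E : List (ℕ × ℕ)} {hE : (endpoints E).Perm (List.range' 1 m)}
    {e : ℕ × ℕ} (he : e ∈ E) : {e.1, e.2} ∈ (ofEdges E hE).parts :=
  mem_edgeParts.2 ⟨e, he, rfl⟩

variable {E : List (ℕ × ℕ)} {hE : (endpoints E).Perm (List.range' 1 m)}

lemma isMatching_ofEdges (hlt : ∀ e ∈ E, e.1 < e.2) : IsMatching (ofEdges E hE) := by
  intro B hB
  obtain ⟨e, he, rfl⟩ := mem_edgeParts.1 hB
  exact Finset.card_pair (hlt e he).ne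

lemma isEdge_ofEdges (hlt : ∀ e ∈ E, e.1 < e.2) {i j : ℕ} :
    IsEdge (ofEdges E hE) i j ↔ (i, j) ∈ E := by
  rw [isEdge_iff_of_isMatching (isMatching_ofEdges hlt)]
  refine ⟨fun ⟨hij, hB⟩ => ?_, fun h => ⟨hlt _ h, pair_mem_ofEdges h⟩⟩
  obtain ⟨e, he, heq⟩ := mem_edgeParts.1 hB
  rw [← Finset.coe_inj, Finset.coe_pair, Finset.coe_pair, Set.pair_eq_pair_iff] at heq
  have := hlt e he
  obtain ⟨rfl, rfl⟩ : e.1 = i ∧ e.2 = j := by omega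
  exact he

/-- The sum picks out the other point of the block of `x` when that block has two points. -/
def partner (P : SP m) (x : ℕ) : ℕ := ∑ y ∈ (P.part x).erase x, y

variable {P : SP m}

lemma partner_eq_of_pair_mem {a b : ℕ} (hab : a ≠ b) (h : {a, b} ∈ P.parts) :
    partner P a = b := by
  rw [partner, P.part_eq_of_mem h (by simp), Finset.erase_insert (by simpa using hab),
    Finset.sum_singleton]

lemma part_eq_pair (hM : IsMatching P) {x : ℕ} (hx : x ∈ Icc 1 m) :
    P.part x = {x, partner P x} ∧ partner P x ≠ x := by
  obtain ⟨a, b, hab, hB⟩ := Finset.card_eq_two.1 (hM _ (P.part_mem.2 hx))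
  have hxB : x ∈ P.part x := P.mem_part hx
  have hmem := P.part_mem.2 hx
  rw [hB] at hxB hmem ⊢
  obtain rfl | rfl : x = a ∨ x = b := by simpa using hxB
  · rw [partner_eq_of_pair_mem hab hmem]
    exact ⟨rfl, hab.symm⟩
  · rw [Finset.pair_comm] at hmem ⊢
    rw [partner_eq_of_pair_mem hab.symm hmem]
    exact ⟨rfl, hab⟩

theorem isTwoNoncrossingPartner_partner (hM : IsMatching P) (hcr : dcr 2 P = 0) :
    IsTwoNoncrossingPartner (partner P) m := by
  have hpair : ∀ x ∈ Icc 1 m, {x, partner P x} ∈ P.parts := fun x hx =>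
    (part_eq_pair hM hx).1 ▸ P.part_mem.2 hx
  refine ⟨fun x hx => P.part_subset x ?_, fun x hx => ?_, fun x hx => (part_eq_pair hM hx).2,
    fun x hx y hy hxy hπ => ?_⟩
  · rw [(part_eq_pair hM hx).1]
    simp
  · exact partner_eq_of_pair_mem (part_eq_pair hM hx).2 (Finset.pair_comm x _ ▸ hpair x hx)
  · by_contra! h
    refine dcr_eq_zero_iff.1 hcr (x, partner P x) (y, partner P y) ?_ ?_
      ⟨hxy, by omega, hπ, show 2 ≤ partner P x - y by omega⟩
    · exact (isEdge_iff_of_isMatching hM).2 ⟨by omega, hpair x hx⟩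
    · exact (isEdge_iff_of_isMatching hM).2 ⟨by omega, hpair y hy⟩

end Matching

section Bijection

variable {m : ℕ} {P Q : SP m}

lemma encodeInv_one (π : ℕ → ℕ) : EncodeInv π 1 [] :=
  ⟨List.pairwise_singleton _ _, fun x => by simp only [List.not_mem_nil, false_iff]; omega,
    by simp⟩

lemma decode_encode_partner (hM : IsMatching P) (hcr : dcr 2 P = 0) :
    IsLittleSchroederFrom 0 (encode (partner P) m 1) ∧
      SwapsEnds (partner P) (decode (encode (partner P) m 1) 1 []) :=
  decode_encode (isTwoNoncrossingPartner_partner hM hcr) m 1 [] one_pos (add_comm 1 m)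
    (encodeInv_one _)

theorem eq_of_encode_partner_eq (hP : IsMatching P) (hPc : dcr 2 P = 0) (hQ : IsMatching Q)
    (hQc : dcr 2 Q = 0) (h : encode (partner P) m 1 = encode (partner Q) m 1) : P = Q := by
  obtain ⟨hl, hswP⟩ := decode_encode_partner hP hPc
  obtain ⟨-, hswQ⟩ := decode_encode_partner hQ hQc
  rw [h] at hl hswP
  refine Finpartition.ext_of_part_eq fun x hx => ?_
  have : x ∈ endpoints (decode (encode (partner Q) m 1) 1 []) := by
    rw [(endpoints_decode_perm (s := []) (p := 1) hl).mem_iff, xlen_encode]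
    simp only [mem_Icc, List.nil_append, List.mem_range'_1] at hx ⊢
    omega
  rw [(part_eq_pair hP hx).1, (part_eq_pair hQ hx).1]
  obtain ⟨e, he, rfl | rfl⟩ := mem_endpoints.1 this
  · rw [(hswP e he).1, (hswQ e he).1]
  · rw [(hswP e he).2, (hswQ e he).2]

theorem exists_encode_partner_eq {l : List SStep} (hl : IsLittleSchroederFrom 0 l)
    (hm : xlen l = m) : ∃ P : SP m, IsMatching P ∧ dcr 2 P = 0 ∧ encode (partner P) m 1 = l := by
  subst hm
  have hs : [1].Pairwise (· > ·) := List.pairwise_singleton _ _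
  have hE : (endpoints (decode l 1 [])).Perm (List.range' 1 (xlen l)) := endpoints_decode_perm hl
  have hlt : ∀ e ∈ decode l 1 [], e.1 < e.2 := fun e he => (bounds_of_mem_decode hs hl e he).1
  refine ⟨ofEdges _ hE, isMatching_ofEdges hlt, dcr_eq_zero_iff.2 fun e₁ e₂ h₁ h₂ => ?_, ?_⟩
  · rw [isEdge_ofEdges hlt] at h₁ h₂
    exact decode_not_crossPair hs hl e₁ h₁ e₂ h₂
  · refine encode_decode hs hl fun e he => ⟨?_, ?_⟩
    · exact partner_eq_of_pair_mem (hlt e he).ne (pair_mem_ofEdges he)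
    · exact partner_eq_of_pair_mem (hlt e he).ne' (Finset.pair_comm e.1 e.2 ▸ pair_mem_ofEdges he)

end Bijection

end LittleSchroederMatching

open LittleSchroederMatching

/-- The number of 2-distant noncrossing complete matchings of `[2n]` is the
`n`-th little Schröder number. -/
theorem ncm_two_eq_littleSchroeder (n : ℕ) :
    NCM 2 (2 * n) = littleSchroeder n := by
  refine Set.ncard_congr (fun P _ => encode (partner P) (2 * n) 1) ?_ ?_ ?_
  · rintro P ⟨hM, hcr⟩
    exact isLittleSchroederPath_iff.2 ⟨xlen_encode _ _ _, (decode_encode_partner hM hcr).1⟩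
  · rintro P Q ⟨hP, hPc⟩ ⟨hQ, hQc⟩ h
    exact eq_of_encode_partner_eq hP hPc hQ hQc h
  · intro l hl
    obtain ⟨hlen, hl⟩ := isLittleSchroederPath_iff.1 hl
    obtain ⟨P, hM, hcr, hP⟩ := exists_encode_partner_eq hl hlen
    exact ⟨P, ⟨hM, hcr⟩, hP⟩
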